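/- arXiv:math/0404238 — 5 statements merged into one kernel-verified Lean document; each statement's English description precedes it below -/
import Mathlib

section
/- Let n ≥ 4 be a natural number and N = n*(n-1)/2. Let (ε, W) be a Weyl candidate in dimension n, with pair matrix M, characteristic coefficients c k, and half-sum chains G. Assume c N ≠ 0 (equivalently, det M ≠ 0). Suppose V : Fin n → ℝ and H : Fin n → Fin n → Fin n → ℝ satisfy ∑ d, W a b c d * V d = H a b c for all a, b, c. Then for every a, V a = (1 / (2*(n-1)*(c N))) * ∑_{k=0}^{N-2} (c k) * (∑_{i,j,b} H i j b * G (N-1-k) a b i j). In particular, V is uniquely determined by W and H. -/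
/-!
Cayley–Hamilton for the pair matrix `M` gives `∑_{k<N} c_k M^(N-k) = -c_N 1`. The entries of
`M^(m+1)` are the half-sum chains `G (m+1)`: summing over all index pairs `(i, j)` counts each
unordered pair twice, which the factor `1/2` compensates. Both sides are antisymmetric in each
index pair, so the identity holds for all indices, with `1` replaced by the generalized Kronecker
delta. Contracting `b` with `c` and against `V^d`, the delta gives `c_N (n - 1) V^a`, while
`W V = H` turns each `G (m+2)` into `G (m+1)` contracted with `H`, and the remaining term
`∑_b W^{ab}_{bd}` vanishes by pair symmetry and trace-freeness.
-/

noncomputable section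

open Finset

/-- A Weyl candidate in dimension `n`: diagonal metric signs `ε` and mixed components
`W a b c d = C^{ab}{}_{cd}` satisfying antisymmetry in each pair, trace-freeness,
pair-interchange symmetry and the first Bianchi identity (with indices moved by `ε`). -/
def IsWeylCandidate {n : ℕ} (ε : Fin n → ℝ) (W : Fin n → Fin n → Fin n → Fin n → ℝ) : Prop :=
  (∀ i, ε i = 1 ∨ ε i = -1) ∧
  (∀ a b c d, W a b c d = -(W b a c d)) ∧
  (∀ a b c d, W a b c d = -(W a b d c)) ∧
  (∀ a c, ∑ i, W a i c i = 0) ∧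
  (∀ a b c d, ε a * ε b * W a b c d = ε c * ε d * W c d a b) ∧
  (∀ a b c d, ε b * W a b c d + ε c * W a c d b + ε d * W a d b c = 0)

/-- The pair matrix of `W`: the `N × N` matrix (`N = n(n-1)/2`) indexed by ordered pairs
`a < b`, with entries `W a b c d`. -/
def pairMatrix {n : ℕ} (W : Fin n → Fin n → Fin n → Fin n → ℝ) :
    Matrix {q : Fin n × Fin n // q.1 < q.2} {q : Fin n × Fin n // q.1 < q.2} ℝ :=
  fun p q => W p.1.1 p.1.2 q.1.1 q.1.2

/-- The characteristic coefficients of `W`: `c k` is the coefficient of `X^(N-k)` in the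
characteristic polynomial of the pair matrix, `N = n(n-1)/2`. -/
def charCoeff {n : ℕ} (W : Fin n → Fin n → Fin n → Fin n → ℝ) (k : ℕ) : ℝ :=
  ((pairMatrix W).charpoly).coeff (n * (n - 1) / 2 - k)

/-- The half-sum chains of `W`: `halfChain W 1 = W` and
`halfChain W (p+1) a b c d = (1/2) ∑_{i,j} halfChain W p a b i j * W i j c d`. -/
def halfChain {n : ℕ} (W : Fin n → Fin n → Fin n → Fin n → ℝ) :
    ℕ → Fin n → Fin n → Fin n → Fin n → ℝ
  | 0 => fun _ _ _ _ => 0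
  | 1 => W
  | (p + 2) => fun a b c d => (1 / 2) * ∑ i, ∑ j, halfChain W (p + 1) a b i j * W i j c d


theorem Matrix.sum_range_charpoly_coeff_smul_pow {ι R : Type*} [Fintype ι] [DecidableEq ι]
    [CommRing R] [Nontrivial R] (A : Matrix ι ι R) :
    ∑ k ∈ range (Fintype.card ι + 1), A.charpoly.coeff k • A ^ k = 0 := by
  simpa [Polynomial.aeval_eq_sum_range] using A.aeval_self_charpoly

section Pairs

variable {ι R : Type*}

theorem card_subtype_fst_lt_snd [Fintype ι] [LinearOrder ι] :
    Fintype.card {q : ι × ι // q.1 < q.2} = (Fintype.card ι).choose 2 := by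
  rw [Fintype.card_subtype, ← univ_product_univ, card_product_filter_lt, card_univ]

theorem sum_sum_eq_two_nsmul_sum_lt [Fintype ι] [LinearOrder ι] {M : Type*} [AddCommMonoid M]
    (f : ι → ι → M) (hf : ∀ i j, f i j = f j i) (hd : ∀ i, f i i = 0) :
    ∑ i, ∑ j, f i j = 2 • ∑ q : {q : ι × ι // q.1 < q.2}, f q.1.1 q.1.2 := by
  have split : ∀ i j, f i j = (if i < j then f i j else 0) + (if j < i then f i j else 0) := by
    intro i j
    rcases lt_trichotomy i j with h | rfl | h
    · simp [h, h.not_gt]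
    · simp [hd]
    · simp [h, h.not_gt]
  have upper : ∑ i, ∑ j, (if i < j then f i j else 0) =
      ∑ q : {q : ι × ι // q.1 < q.2}, f q.1.1 q.1.2 := by
    rw [← Fintype.sum_prod_type', ← sum_filter]
    exact sum_subtype _ (by simp) fun q : ι × ι => f q.1 q.2
  have lower : ∑ i, ∑ j, (if j < i then f i j else 0) =
      ∑ i, ∑ j, (if i < j then f i j else 0) := by
    rw [sum_comm]
    simp only [hf]
  calc ∑ i, ∑ j, f i j
      = ∑ i, ∑ j, ((if i < j then f i j else 0) + (if j < i then f i j else 0)) :=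
        sum_congr rfl fun i _ => sum_congr rfl fun j _ => split i j
    _ = _ := by simp only [sum_add_distrib, lower, upper, two_nsmul]

theorem eq_of_antisymm_of_eq_of_lt [LinearOrder ι] [Ring R] [NoZeroDivisors R] [CharZero R]
    {f g : ι → ι → R} (hf : ∀ a b, f a b = -f b a) (hg : ∀ a b, g a b = -g b a)
    (h : ∀ a b, a < b → f a b = g a b) : f = g := by
  funext a b
  rcases lt_trichotomy a b with hab | rfl | hab
  · exact h a b hab
  · rw [CharZero.eq_neg_self_iff.1 (hf a a), CharZero.eq_neg_self_iff.1 (hg a a)]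
  · rw [hf, hg, h b a hab]

def IsPairAntisymm [Neg R] (F : ι → ι → ι → ι → R) : Prop :=
  (∀ a b c d, F a b c d = -F b a c d) ∧ ∀ a b c d, F a b c d = -F a b d c

namespace IsPairAntisymm

theorem ext_of_lt [LinearOrder ι] [Ring R] [NoZeroDivisors R] [CharZero R]
    {F G : ι → ι → ι → ι → R} (hF : IsPairAntisymm F) (hG : IsPairAntisymm G)
    (h : ∀ a b c d, a < b → c < d → F a b c d = G a b c d) : F = G := by
  have upper : ∀ a b, a < b → F a b = G a b := fun a b hab =>
    eq_of_antisymm_of_eq_of_lt (hF.2 a b) (hG.2 a b) fun c d hcd => h a b c d hab hcd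
  funext a b c d
  have := eq_of_antisymm_of_eq_of_lt (f := fun a b => F a b c d) (g := fun a b => G a b c d)
    (fun a b => hF.1 a b c d) (fun a b => hG.1 a b c d) fun a b hab => by rw [upper a b hab]
  exact congrFun (congrFun this a) b

theorem const_mul [Ring R] {F : ι → ι → ι → ι → R} (hF : IsPairAntisymm F) (r : R) :
    IsPairAntisymm fun a b c d => r * F a b c d :=
  ⟨fun a b c d => by simp only [hF.1 a b c d, mul_neg],
    fun a b c d => by simp only [hF.2 a b c d, mul_neg]⟩

theorem sum_mul [Ring R] {κ : Type*} (s : Finset κ) (r : κ → R)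
    {F : κ → ι → ι → ι → ι → R} (hF : ∀ k, IsPairAntisymm (F k)) :
    IsPairAntisymm fun a b c d => ∑ k ∈ s, r k * F k a b c d :=
  ⟨fun a b c d => by simp only [fun k => (hF k).1 a b c d, mul_neg, sum_neg_distrib],
    fun a b c d => by simp only [fun k => (hF k).2 a b c d, mul_neg, sum_neg_distrib]⟩

end IsPairAntisymm

def genKroneckerDelta [DecidableEq ι] [CommRing R] (a b c d : ι) : R :=
  (if a = c then 1 else 0) * (if b = d then 1 else 0) -
    (if a = d then 1 else 0) * (if b = c then 1 else 0)

theorem isPairAntisymm_genKroneckerDelta [DecidableEq ι] [CommRing R] :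
    IsPairAntisymm (genKroneckerDelta (ι := ι) (R := R)) :=
  ⟨fun a b c d => by simp only [genKroneckerDelta]; ring,
    fun a b c d => by simp only [genKroneckerDelta]; ring⟩

theorem genKroneckerDelta_of_lt [LinearOrder ι] [CommRing R] (p q : {q : ι × ι // q.1 < q.2}) :
    genKroneckerDelta p.1.1 p.1.2 q.1.1 q.1.2 = (1 : Matrix _ _ R) p q := by
  obtain ⟨⟨a, b⟩, hab⟩ := p
  obtain ⟨⟨c, d⟩, hcd⟩ := q
  have swap_zero : (if a = d then (1 : R) else 0) * (if b = c then 1 else 0) = 0 := by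
    split_ifs with had hbc
    · subst had hbc
      exact absurd hab (lt_asymm hcd)
    all_goals simp
  simp only [genKroneckerDelta, swap_zero, sub_zero, Matrix.one_apply, Subtype.ext_iff,
    Prod.ext_iff, ite_zero_mul_ite_zero, mul_one]

theorem sum_sum_genKroneckerDelta_mul [Fintype ι] [DecidableEq ι] [CommRing R] (V : ι → R)
    (a : ι) :
    ∑ b, ∑ d, genKroneckerDelta a b b d * V d = (1 - Fintype.card ι) * V a := by
  simp [genKroneckerDelta, sub_mul, sum_sub_distrib, ite_mul]

end Pairs

section HalfChain

variable {n : ℕ} {W : Fin n → Fin n → Fin n → Fin n → ℝ}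

theorem isPairAntisymm_halfChain (hW : IsPairAntisymm W) : ∀ m, IsPairAntisymm (halfChain W m)
  | 0 => ⟨fun _ _ _ _ => by simp [halfChain], fun _ _ _ _ => by simp [halfChain]⟩
  | 1 => hW
  | p + 2 => by
    have ih := isPairAntisymm_halfChain hW (p + 1)
    exact ⟨fun a b c d => by simp only [halfChain, ih.1 a b, neg_mul, sum_neg_distrib, mul_neg],
      fun a b c d => by simp only [halfChain, fun i j => hW.2 i j c d, mul_neg, sum_neg_distrib]⟩

theorem pairMatrix_pow_succ_apply (hW : IsPairAntisymm W) (m : ℕ)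
    (p q : {q : Fin n × Fin n // q.1 < q.2}) :
    (pairMatrix W ^ (m + 1)) p q = halfChain W (m + 1) p.1.1 p.1.2 q.1.1 q.1.2 := by
  induction m generalizing q with
  | zero => rw [zero_add, pow_one]; rfl
  | succ m ih =>
    have halve := sum_sum_eq_two_nsmul_sum_lt
      (fun i j => halfChain W (m + 1) p.1.1 p.1.2 i j * W i j q.1.1 q.1.2)
      (fun i j => by rw [(isPairAntisymm_halfChain hW (m + 1)).2 _ _ i j, hW.1 i j]; ring)
      (fun i => by rw [CharZero.eq_neg_self_iff.1 (hW.1 i i _ _), mul_zero])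
    rw [pow_succ, Matrix.mul_apply]
    dsimp only [halfChain]
    rw [halve, nsmul_eq_mul]
    simp only [ih, pairMatrix]
    ring

theorem sum_charCoeff_smul_pairMatrix_pow {N : ℕ} (hN : N = n * (n - 1) / 2) :
    ∑ k ∈ range N, charCoeff W k • pairMatrix W ^ (N - k) = -(charCoeff W N • 1) := by
  have hCH := (pairMatrix W).sum_range_charpoly_coeff_smul_pow
  rw [card_subtype_fst_lt_snd, Fintype.card_fin, Nat.choose_two_right, ← hN,
    ← sum_range_reflect, sum_range_succ] at hCH
  simp only [add_tsub_cancel_right, Nat.sub_self, pow_zero] at hCH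
  simp only [charCoeff, ← hN, Nat.sub_self]
  exact eq_neg_of_add_eq_zero_left hCH

theorem sum_charCoeff_mul_halfChain (hW : IsPairAntisymm W) {N : ℕ} (hN : N = n * (n - 1) / 2)
    (a b c d : Fin n) :
    ∑ k ∈ range N, charCoeff W k * halfChain W (N - k) a b c d =
      -charCoeff W N * genKroneckerDelta a b c d := by
  have lhs := IsPairAntisymm.sum_mul (F := fun k => halfChain W (N - k)) (range N) (charCoeff W)
    fun k => isPairAntisymm_halfChain hW (N - k)
  have rhs := (isPairAntisymm_genKroneckerDelta (ι := Fin n)).const_mul (-charCoeff W N)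
  refine congrFun (congr_fun₃ (lhs.ext_of_lt rhs fun a b c d hab hcd => ?_) a b c) d
  set p : {q : Fin n × Fin n // q.1 < q.2} := ⟨(a, b), hab⟩
  set q : {q : Fin n × Fin n // q.1 < q.2} := ⟨(c, d), hcd⟩
  have hpow : ∀ k ∈ range N, charCoeff W k * (pairMatrix W ^ (N - k)) p q =
      charCoeff W k * halfChain W (N - k) a b c d := fun k hk => by
    obtain ⟨m, hm⟩ := Nat.exists_eq_add_one_of_ne_zero (Nat.sub_ne_zero_of_lt (mem_range.1 hk))
    rw [hm, pairMatrix_pow_succ_apply hW]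
  have hδ : genKroneckerDelta a b c d = (1 : Matrix _ _ ℝ) p q := genKroneckerDelta_of_lt p q
  have hCH := congrFun (congrFun (sum_charCoeff_smul_pairMatrix_pow (W := W) hN) p) q
  simp only [Matrix.sum_apply, Matrix.smul_apply, Matrix.neg_apply, smul_eq_mul] at hCH
  rw [← sum_congr rfl hpow, hCH, hδ, neg_mul]

theorem sum_charCoeff_mul_sum_sum_halfChain (hW : IsPairAntisymm W) {N : ℕ}
    (hN : N = n * (n - 1) / 2) (V : Fin n → ℝ) (a : Fin n) :
    ∑ k ∈ range N, charCoeff W k * ∑ b, ∑ d, halfChain W (N - k) a b b d * V d =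
      charCoeff W N * ((n : ℝ) - 1) * V a := by
  calc
    _ = ∑ b, ∑ d, (∑ k ∈ range N, charCoeff W k * halfChain W (N - k) a b b d) * V d := by
      simp only [mul_sum, sum_mul, mul_assoc]
      rw [sum_comm]
      exact sum_congr rfl fun b _ => sum_comm
    _ = -charCoeff W N * ∑ b, ∑ d, genKroneckerDelta a b b d * V d := by
      simp only [sum_charCoeff_mul_halfChain hW hN, mul_sum, mul_assoc]
    _ = _ := by
      rw [sum_sum_genKroneckerDelta_mul, Fintype.card_fin]
      ring

variable {ε : Fin n → ℝ}

theorem IsWeylCandidate.isPairAntisymm (hW : IsWeylCandidate ε W) : IsPairAntisymm W :=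
  ⟨hW.2.1, hW.2.2.1⟩

theorem IsWeylCandidate.sum_apply_self_middle (hW : IsWeylCandidate ε W) (a d : Fin n) :
    ∑ b, W a b b d = 0 := by
  obtain ⟨hε, hl, -, htr, hsymm, -⟩ := hW
  have hε2 : ∀ i, ε i * ε i = 1 := fun i => by rcases hε i with h | h <;> simp [h]
  have interchange : ∀ b, W a b b d = -(ε a * ε d) * W d b a b := fun b => by
    linear_combination (ε a * ε b) * hsymm a b b d - W a b b d * hε2 a
      + (ε a * ε d * W b d a b - ε a * ε a * W a b b d) * hε2 b + (ε a * ε d) * hl b d a b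
  simp only [interchange, ← mul_sum, htr, mul_zero]

theorem sum_sum_halfChain_succ_mul (hW : IsWeylCandidate ε W) {V : Fin n → ℝ}
    {H : Fin n → Fin n → Fin n → ℝ}
    (hVH : ∀ a b c, ∑ d, W a b c d * V d = H a b c) (m : ℕ) (a : Fin n) :
    ∑ b, ∑ d, halfChain W (m + 1) a b b d * V d =
      1 / 2 * ∑ i, ∑ j, ∑ b, H i j b * halfChain W m a b i j := by
  cases m with
  | zero =>
    simp only [halfChain, mul_zero, sum_const_zero]
    rw [sum_comm]
    simp only [← sum_mul, hW.sum_apply_self_middle, zero_mul, sum_const_zero]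
  | succ m =>
    have contract : ∀ b, ∑ d, halfChain W (m + 2) a b b d * V d =
        1 / 2 * ∑ i, ∑ j, H i j b * halfChain W (m + 1) a b i j := fun b => by
      simp only [halfChain, ← hVH, sum_mul, mul_sum]
      rw [sum_comm]
      refine sum_congr rfl fun i _ => ?_
      rw [sum_comm]
      exact sum_congr rfl fun j _ => sum_congr rfl fun d _ => by ring
    rw [sum_congr rfl fun b _ => contract b, ← mul_sum, sum_comm]
    exact congrArg _ (sum_congr rfl fun i _ => sum_comm)

end HalfChain

/-- The Lemma of the paper: if `c_N ≠ 0`, the inhomogeneous algebraic equation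
`C^{ab}{}_{cd} V^d = H^{ab}{}_c` has the unique solution given by the Cayley–Hamilton
expansion; in particular `V` is uniquely determined by `W` and `H`. -/
theorem lemma_unique_solution {n : ℕ} (hn : 4 ≤ n) (N : ℕ) (hN : N = n * (n - 1) / 2)
    (ε : Fin n → ℝ) (W : Fin n → Fin n → Fin n → Fin n → ℝ)
    (hW : IsWeylCandidate ε W)
    (hcN : charCoeff W N ≠ 0)
    (V : Fin n → ℝ) (H : Fin n → Fin n → Fin n → ℝ)
    (hVH : ∀ a b c, ∑ d, W a b c d * V d = H a b c) :
    ∀ a, V a = (1 / (2 * ((n : ℝ) - 1) * charCoeff W N)) *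
      ∑ k ∈ Finset.range (N - 1), charCoeff W k *
        (∑ i, ∑ j, ∑ b, H i j b * halfChain W (N - 1 - k) a b i j) := by
  intro a
  have hN0 : N ≠ 0 := by
    have : 2 ≤ n * (n - 1) := Nat.mul_le_mul (by omega : 2 ≤ n) (by omega : 1 ≤ n - 1)
    omega
  have hn1 : (n : ℝ) - 1 ≠ 0 := by
    have : (4 : ℝ) ≤ n := by exact_mod_cast hn
    linarith
  obtain ⟨M, rfl⟩ := Nat.exists_eq_add_one_of_ne_zero hN0
  have hCH := sum_charCoeff_mul_sum_sum_halfChain hW.isPairAntisymm hN V a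
  have contract_step : ∀ k ∈ range (M + 1),
      charCoeff W k * ∑ b, ∑ d, halfChain W (M + 1 - k) a b b d * V d =
        charCoeff W k * (1 / 2 * ∑ i, ∑ j, ∑ b, H i j b * halfChain W (M - k) a b i j) :=
    fun k hk => by
      rw [Nat.sub_add_comm (mem_range_succ_iff.1 hk), sum_sum_halfChain_succ_mul hW hVH]
  rw [sum_congr rfl contract_step, sum_range_succ, Nat.sub_self] at hCH
  simp only [halfChain, mul_zero, sum_const_zero, add_zero,
    mul_left_comm (charCoeff W _) (1 / 2 : ℝ), ← mul_sum] at hCH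
  rw [add_tsub_cancel_right]
  field_simp
  linear_combination (-2) * hCH
end
end

section
/- Let n ≥ 2 and N = n*(n-1)/2. Let W : Fin n → Fin n → Fin n → Fin n → ℝ be antisymmetric in each index pair and trace-free, with pair matrix M, characteristic coefficients c k, and half-sum chains G. Then c 1 = 0, and for all a, b, c, d in Fin n: G N a b c d + ∑_{k=2}^{N-1} (c k) * G (N-k) a b c d + (c N) * ((if a = c then (1:ℝ) else 0) * (if b = d then (1:ℝ) else 0) - (if a = d then (1:ℝ) else 0) * (if b = c then (1:ℝ) else 0)) = 0. (This is the Cayley–Hamilton theorem for the trace-free pair matrix of W, written in tensor chain notation.) -/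
noncomputable section

open Finset

/- ### Auxiliary lemmas -/

lemma sum_pairs {n : ℕ} (f : Fin n → Fin n → ℝ) (hsymm : ∀ i j, f i j = f j i)
    (hdiag : ∀ i, f i i = 0) :
    ∑ i, ∑ j, f i j = 2 * ∑ q : {q : Fin n × Fin n // q.1 < q.2}, f q.1.1 q.1.2 := by
  have h1 : ∑ i, ∑ j, f i j = ∑ p : Fin n × Fin n, f p.1 p.2 := by
    rw [Fintype.sum_prod_type]
  have h2 : ∑ q : {q : Fin n × Fin n // q.1 < q.2}, f q.1.1 q.1.2
      = ∑ p ∈ univ.filter (fun p : Fin n × Fin n => p.1 < p.2), f p.1 p.2 := by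
    exact (Finset.sum_subtype _ (fun x => by simp) (fun p : Fin n × Fin n => f p.1 p.2)).symm
  have h3 : ∑ p ∈ univ.filter (fun p : Fin n × Fin n => ¬ p.1 < p.2), f p.1 p.2
      = ∑ p ∈ univ.filter (fun p : Fin n × Fin n => p.2 < p.1), f p.1 p.2
        + ∑ p ∈ univ.filter (fun p : Fin n × Fin n => p.1 = p.2), f p.1 p.2 := by
    rw [← Finset.sum_filter_add_sum_filter_not
      (univ.filter (fun p : Fin n × Fin n => ¬ p.1 < p.2))
      (fun p : Fin n × Fin n => p.2 < p.1)]
    congr 1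
    · congr 1; ext p; simp only [mem_filter, mem_univ, true_and]; omega
    · congr 1; ext p; simp only [mem_filter, mem_univ, true_and]
      constructor
      · rintro ⟨h1', h2'⟩; omega
      · intro h; omega
  have h4 : ∑ p ∈ univ.filter (fun p : Fin n × Fin n => p.1 = p.2), f p.1 p.2 = 0 := by
    apply Finset.sum_eq_zero
    intro p hp
    simp only [mem_filter] at hp
    rw [hp.2]; exact hdiag _
  have h5 : ∑ p ∈ univ.filter (fun p : Fin n × Fin n => p.2 < p.1), f p.1 p.2
      = ∑ p ∈ univ.filter (fun p : Fin n × Fin n => p.1 < p.2), f p.1 p.2 := by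
    apply Finset.sum_nbij' (fun p => Prod.swap p) (fun p => Prod.swap p)
    · intro p hp; simp_all
    · intro p hp; simp_all
    · intro p hp; simp
    · intro p hp; simp
    · intro p hp; exact hsymm p.1 p.2
  rw [h1, ← Finset.sum_filter_add_sum_filter_not univ (fun p : Fin n × Fin n => p.1 < p.2),
    h3, h4, h5, h2]
  ring

lemma card_pairs {n : ℕ} :
    Fintype.card {q : Fin n × Fin n // q.1 < q.2} = n * (n - 1) / 2 := by
  have e : {q : Fin n × Fin n // q.1 < q.2} ≃ (Σ b : Fin n, Fin b.val) :=
    { toFun := fun q => ⟨q.1.2, ⟨q.1.1.val, q.2⟩⟩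
      invFun := fun s => ⟨(⟨s.2.val, lt_trans s.2.isLt s.1.isLt⟩, s.1), s.2.isLt⟩
      left_inv := fun q => by ext <;> rfl
      right_inv := fun s => by rfl }
  rw [Fintype.card_congr e, Fintype.card_sigma]
  simp only [Fintype.card_fin]
  rw [Fin.sum_univ_eq_sum_range (fun i => i) n, Finset.sum_range_id]

section ChainLemmas

variable {n : ℕ} {W : Fin n → Fin n → Fin n → Fin n → ℝ}

lemma halfChain_a1 (hA1 : ∀ a b c d, W a b c d = -(W b a c d)) :
    ∀ p a b c d, halfChain W p a b c d = -halfChain W p b a c d := by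
  intro p
  induction p with
  | zero => intro a b c d; simp [halfChain]
  | succ p ih =>
    match p with
    | 0 => intro a b c d; exact hA1 a b c d
    | p + 1 =>
      intro a b c d
      show (1 / 2 : ℝ) * ∑ i, ∑ j, halfChain W (p + 1) a b i j * W i j c d
        = -((1 / 2 : ℝ) * ∑ i, ∑ j, halfChain W (p + 1) b a i j * W i j c d)
      have hpt : ∀ i j : Fin n, halfChain W (p + 1) b a i j * W i j c d
          = -(halfChain W (p + 1) a b i j * W i j c d) := by
        intro i j; rw [ih a b i j]; ring
      simp only [hpt, Finset.sum_neg_distrib]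
      ring

lemma halfChain_a2 (hA2 : ∀ a b c d, W a b c d = -(W a b d c)) :
    ∀ p a b c d, halfChain W p a b c d = -halfChain W p a b d c := by
  intro p
  match p with
  | 0 => intro a b c d; simp [halfChain]
  | 1 => exact hA2
  | p + 2 =>
    intro a b c d
    show (1 / 2 : ℝ) * ∑ i, ∑ j, halfChain W (p + 1) a b i j * W i j c d
      = -((1 / 2 : ℝ) * ∑ i, ∑ j, halfChain W (p + 1) a b i j * W i j d c)
    have hpt : ∀ i j : Fin n, halfChain W (p + 1) a b i j * W i j d c
        = -(halfChain W (p + 1) a b i j * W i j c d) := by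
      intro i j; rw [hA2 i j c d]; ring
    simp only [hpt, Finset.sum_neg_distrib]
    ring

lemma halfChain_d1 (hA1 : ∀ a b c d, W a b c d = -(W b a c d))
    (p : ℕ) (a c d : Fin n) : halfChain W p a a c d = 0 := by
  have := halfChain_a1 hA1 p a a c d; linarith

lemma halfChain_d2 (hA2 : ∀ a b c d, W a b c d = -(W a b d c))
    (p : ℕ) (a b c : Fin n) : halfChain W p a b c c = 0 := by
  have := halfChain_a2 hA2 p a b c c; linarith

lemma halfChain_pow (hA1 : ∀ a b c d, W a b c d = -(W b a c d))
    (hA2 : ∀ a b c d, W a b c d = -(W a b d c)) :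
    ∀ p, 1 ≤ p → ∀ (q r : {q : Fin n × Fin n // q.1 < q.2}),
      halfChain W p q.1.1 q.1.2 r.1.1 r.1.2 = ((pairMatrix W) ^ p) q r := by
  intro p
  induction p with
  | zero => intro h; omega
  | succ p ih =>
    match p with
    | 0 => intro _ q r; rw [pow_one]; rfl
    | p + 1 =>
      intro _ q r
      have key : ∑ i, ∑ j, halfChain W (p + 1) q.1.1 q.1.2 i j * W i j r.1.1 r.1.2
          = 2 * ∑ s : {q : Fin n × Fin n // q.1 < q.2},
              halfChain W (p + 1) q.1.1 q.1.2 s.1.1 s.1.2 * W s.1.1 s.1.2 r.1.1 r.1.2 := by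
        apply sum_pairs
        · intro i j
          rw [halfChain_a2 hA2 (p+1) q.1.1 q.1.2 i j, hA1 i j]; ring
        · intro i; rw [halfChain_d2 hA2]; ring
      show (1 / 2 : ℝ) * ∑ i, ∑ j, _ = _
      rw [key, pow_succ, Matrix.mul_apply]
      rw [← mul_assoc]
      norm_num
      apply Finset.sum_congr rfl
      intro s _
      rw [ih (by omega) q s]
      rfl

end ChainLemmas

lemma delta_eq {n : ℕ} {a b c d : Fin n} (hab : a < b) (hcd : c < d) :
    ((if a = c then (1:ℝ) else 0) * (if b = d then (1:ℝ) else 0)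
      - (if a = d then (1:ℝ) else 0) * (if b = c then (1:ℝ) else 0))
    = if a = c ∧ b = d then 1 else 0 := by
  have key2 : (if a = d then (1:ℝ) else 0) * (if b = c then 1 else 0) = 0 := by
    by_cases h3 : a = d
    · by_cases h4 : b = c
      · exfalso
        rw [Fin.lt_def] at hab hcd; rw [Fin.ext_iff] at h3 h4; omega
      · rw [if_neg h4]; ring
    · rw [if_neg h3]; ring
  by_cases h : a = c ∧ b = d
  · obtain ⟨rfl, rfl⟩ := h
    rw [key2]
    simp
  · rw [if_neg h, key2]
    have key1 : (if a = c then (1:ℝ) else 0) * (if b = d then 1 else 0) = 0 := by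
      by_cases h1 : a = c
      · have h2 : ¬ b = d := fun h2 => h ⟨h1, h2⟩
        rw [if_neg h2]; ring
      · rw [if_neg h1]; ring
    rw [key1]; ring

/-- The left-hand side of the chain Cayley–Hamilton identity. -/
def chainLHS {n : ℕ} (W : Fin n → Fin n → Fin n → Fin n → ℝ) (N : ℕ) (a b c d : Fin n) : ℝ :=
  halfChain W N a b c d
    + (∑ k ∈ Finset.Icc 2 (N - 1), charCoeff W k * halfChain W (N - k) a b c d)
    + charCoeff W N *
        ((if a = c then (1 : ℝ) else 0) * (if b = d then (1 : ℝ) else 0)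
          - (if a = d then (1 : ℝ) else 0) * (if b = c then (1 : ℝ) else 0))

section LHSLemmas

variable {n : ℕ} {W : Fin n → Fin n → Fin n → Fin n → ℝ} {N : ℕ}

lemma chainLHS_a1 (hA1 : ∀ a b c d, W a b c d = -(W b a c d)) (a b c d : Fin n) :
    chainLHS W N a b c d = -chainLHS W N b a c d := by
  unfold chainLHS
  rw [halfChain_a1 hA1 N a b c d]
  have hs : ∑ k ∈ Finset.Icc 2 (N-1), charCoeff W k * halfChain W (N-k) a b c d
      = -∑ k ∈ Finset.Icc 2 (N-1), charCoeff W k * halfChain W (N-k) b a c d := by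
    rw [← Finset.sum_neg_distrib]
    apply Finset.sum_congr rfl
    intro k _
    rw [halfChain_a1 hA1 (N-k) a b c d]; ring
  rw [hs]; ring

lemma chainLHS_a2 (hA2 : ∀ a b c d, W a b c d = -(W a b d c)) (a b c d : Fin n) :
    chainLHS W N a b c d = -chainLHS W N a b d c := by
  unfold chainLHS
  rw [halfChain_a2 hA2 N a b c d]
  have hs : ∑ k ∈ Finset.Icc 2 (N-1), charCoeff W k * halfChain W (N-k) a b c d
      = -∑ k ∈ Finset.Icc 2 (N-1), charCoeff W k * halfChain W (N-k) a b d c := by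
    rw [← Finset.sum_neg_distrib]
    apply Finset.sum_congr rfl
    intro k _
    rw [halfChain_a2 hA2 (N-k) a b c d]; ring
  rw [hs]; ring

lemma chainLHS_d1 (hA1 : ∀ a b c d, W a b c d = -(W b a c d)) (a c d : Fin n) :
    chainLHS W N a a c d = 0 := by
  unfold chainLHS
  simp only [halfChain_d1 hA1, mul_zero, Finset.sum_const_zero]
  ring

lemma chainLHS_d2 (hA2 : ∀ a b c d, W a b c d = -(W a b d c)) (a b c : Fin n) :
    chainLHS W N a b c c = 0 := by
  unfold chainLHS
  simp only [halfChain_d2 hA2, mul_zero, Finset.sum_const_zero]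
  ring

end LHSLemmas

set_option maxHeartbeats 1600000 in
/-- The Cayley–Hamilton theorem for the trace-free pair matrix of an antisymmetric,
trace-free double 2-form `W`, written in tensor chain notation. -/
theorem cayley_hamilton_chain {n : ℕ} (hn : 2 ≤ n) (N : ℕ) (hN : N = n * (n - 1) / 2)
    (W : Fin n → Fin n → Fin n → Fin n → ℝ)
    (hA1 : ∀ a b c d, W a b c d = -(W b a c d))
    (hA2 : ∀ a b c d, W a b c d = -(W a b d c))
    (hTF : ∀ a c, ∑ i, W a i c i = 0) :
    charCoeff W 1 = 0 ∧
    ∀ a b c d : Fin n,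
      halfChain W N a b c d
        + (∑ k ∈ Finset.Icc 2 (N - 1), charCoeff W k * halfChain W (N - k) a b c d)
        + charCoeff W N *
            ((if a = c then (1 : ℝ) else 0) * (if b = d then (1 : ℝ) else 0)
              - (if a = d then (1 : ℝ) else 0) * (if b = c then (1 : ℝ) else 0)) = 0 := by
  have hcard : Fintype.card {q : Fin n × Fin n // q.1 < q.2} = N := by rw [hN, card_pairs]
  have hNe : Nonempty {q : Fin n × Fin n // q.1 < q.2} :=
    ⟨⟨(⟨0, by omega⟩, ⟨1, by omega⟩), by simp [Fin.lt_def]⟩⟩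
  have hN1 : 1 ≤ N := by rw [← hcard]; exact Fintype.card_pos
  -- trace of the pair matrix is zero
  have htr : (pairMatrix W).trace = 0 := by
    have h0 : ∑ i, ∑ j, W i j i j = 0 := by
      have hz : ∀ i : Fin n, ∑ j, W i j i j = 0 := fun i => hTF i i
      simp [hz]
    have h1 := sum_pairs (fun i j => W i j i j)
      (fun i j => by show W i j i j = W j i j i; rw [hA1 i j i j, hA2 j i i j]; ring)
      (fun i => by show W i i i i = 0; have := hA1 i i i i; linarith)
    rw [h0] at h1
    have h2 : ∑ q : {q : Fin n × Fin n // q.1 < q.2}, W q.1.1 q.1.2 q.1.1 q.1.2 = 0 := by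
      linarith
    simpa [Matrix.trace, Matrix.diag, pairMatrix] using h2
  have hcoeffN1 : (pairMatrix W).charpoly.coeff (N - 1) = 0 := by
    have h := Matrix.trace_eq_neg_charpoly_coeff (pairMatrix W)
    rw [hcard, htr] at h
    linarith
  have hc1 : charCoeff W 1 = 0 := by
    unfold charCoeff
    rw [← hN]
    exact hcoeffN1
  refine ⟨hc1, ?_⟩
  have hdeg : (pairMatrix W).charpoly.natDegree = N := by
    rw [Matrix.charpoly_natDegree_eq_dim, hcard]
  have hmono := (pairMatrix W).charpoly_monic
  have hcoefftop : (pairMatrix W).charpoly.coeff N = 1 := by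
    have := hmono.coeff_natDegree
    rwa [hdeg] at this
  have hcN : charCoeff W N = (pairMatrix W).charpoly.coeff 0 := by
    unfold charCoeff
    rw [← hN, Nat.sub_self]
  have hent : ∀ q r : {q : Fin n × Fin n // q.1 < q.2},
      ∑ i ∈ Finset.range (N + 1),
        (pairMatrix W).charpoly.coeff i * ((pairMatrix W) ^ i) q r = 0 := by
    have hCH : (0 : Matrix {q : Fin n × Fin n // q.1 < q.2} {q : Fin n × Fin n // q.1 < q.2} ℝ)
        = ∑ i ∈ Finset.range (N + 1), (pairMatrix W).charpoly.coeff i • (pairMatrix W) ^ i := by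
      rw [← Matrix.aeval_self_charpoly (pairMatrix W), Polynomial.aeval_eq_sum_range, hdeg]
    intro q r
    have h2 : (0 : Matrix {q : Fin n × Fin n // q.1 < q.2} {q : Fin n × Fin n // q.1 < q.2} ℝ) q r
        = (∑ i ∈ Finset.range (N + 1), (pairMatrix W).charpoly.coeff i • (pairMatrix W) ^ i) q r := by
      rw [← hCH]
    simpa [Matrix.sum_apply, Matrix.smul_apply, smul_eq_mul] using h2.symm
  obtain ⟨m, rfl⟩ : ∃ m, N = m + 1 := ⟨N - 1, by omega⟩
  -- key identity for ordered pairs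
  have key' : ∀ (a b c d : Fin n), a < b → c < d → chainLHS W (m + 1) a b c d = 0 := by
    intro a b c d hab hcd
    set q : {q : Fin n × Fin n // q.1 < q.2} := ⟨(a, b), hab⟩ with hq
    set r : {q : Fin n × Fin n // q.1 < q.2} := ⟨(c, d), hcd⟩ with hr
    have h3 : ∑ k ∈ Finset.range (m + 2),
        (pairMatrix W).charpoly.coeff (m + 1 - k) * ((pairMatrix W) ^ (m + 1 - k)) q r = 0 := by
      have h := Finset.sum_range_reflect
        (fun i => (pairMatrix W).charpoly.coeff i * ((pairMatrix W) ^ i) q r) (m + 2)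
      calc ∑ k ∈ Finset.range (m + 2),
            (pairMatrix W).charpoly.coeff (m + 1 - k) * ((pairMatrix W) ^ (m + 1 - k)) q r
          = ∑ k ∈ Finset.range (m + 2),
            (pairMatrix W).charpoly.coeff (m + 2 - 1 - k) * ((pairMatrix W) ^ (m + 2 - 1 - k)) q r := by
            apply Finset.sum_congr rfl; intro k _; norm_num
        _ = ∑ k ∈ Finset.range (m + 2),
            (pairMatrix W).charpoly.coeff k * ((pairMatrix W) ^ k) q r := by
            exact Finset.sum_range_reflect
              (fun i => (pairMatrix W).charpoly.coeff i * ((pairMatrix W) ^ i) q r) (m + 2)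
        _ = 0 := hent q r
    rw [Finset.sum_range_succ, Finset.sum_range_succ'] at h3
    -- h3 : (∑ k ∈ range m, f (k+1) + f 0) + f (m+1) = 0
    have ht0 : (pairMatrix W).charpoly.coeff (m + 1 - 0) * ((pairMatrix W) ^ (m + 1 - 0)) q r
        = halfChain W (m + 1) a b c d := by
      simp only [Nat.sub_zero]
      rw [hcoefftop, halfChain_pow hA1 hA2 (m + 1) (by omega) q r]
      ring
    have htop : (pairMatrix W).charpoly.coeff (m + 1 - (m + 1))
          * ((pairMatrix W) ^ (m + 1 - (m + 1))) q r
        = charCoeff W (m + 1) * (if a = c ∧ b = d then (1:ℝ) else 0) := by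
      rw [Nat.sub_self, pow_zero, hcN]
      have hiff : (q = r) ↔ (a = c ∧ b = d) := by
        rw [hq, hr, Subtype.mk.injEq, Prod.mk.injEq]
      rw [Matrix.one_apply, if_congr hiff rfl rfl]
    have hmid : ∑ k ∈ Finset.range m,
          (pairMatrix W).charpoly.coeff (m + 1 - (k + 1)) * ((pairMatrix W) ^ (m + 1 - (k + 1))) q r
        = ∑ k ∈ Finset.Icc 2 m, charCoeff W k * halfChain W (m + 1 - k) a b c d := by
      have hstep1 : ∑ k ∈ Finset.range m,
            (pairMatrix W).charpoly.coeff (m + 1 - (k + 1))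
              * ((pairMatrix W) ^ (m + 1 - (k + 1))) q r
          = ∑ k ∈ Finset.Icc 1 m,
            (pairMatrix W).charpoly.coeff (m + 1 - k) * ((pairMatrix W) ^ (m + 1 - k)) q r := by
        rw [← Finset.Ico_add_one_right_eq_Icc, Finset.sum_Ico_eq_sum_range]
        apply Finset.sum_congr (by norm_num)
        intro k _
        rw [Nat.add_comm 1 k]
      rw [hstep1]
      rcases Nat.eq_zero_or_pos m with hm0 | hm1
      · subst hm0; simp
      · have hIcc : Finset.Icc 1 m = insert 1 (Finset.Icc 2 m) := by
          ext k; simp only [Finset.mem_Icc, Finset.mem_insert]; omega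
        rw [hIcc, Finset.sum_insert (by simp)]
        have h1z : (pairMatrix W).charpoly.coeff (m + 1 - 1) * ((pairMatrix W) ^ (m + 1 - 1)) q r
            = 0 := by
          have : (pairMatrix W).charpoly.coeff (m + 1 - 1) = 0 := hcoeffN1
          rw [this]; ring
        rw [h1z, zero_add]
        apply Finset.sum_congr rfl
        intro k hk
        simp only [Finset.mem_Icc] at hk
        have hcc : charCoeff W k = (pairMatrix W).charpoly.coeff (m + 1 - k) := by
          unfold charCoeff; rw [← hN]
        rw [hcc, halfChain_pow hA1 hA2 (m + 1 - k) (by omega) q r]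
    rw [ht0, htop, hmid] at h3
    unfold chainLHS
    rw [delta_eq hab hcd]
    simp only [Nat.add_sub_cancel]
    linarith
  intro a b c d
  show chainLHS W (m + 1) a b c d = 0
  rcases lt_trichotomy a b with hab | rfl | hab
  · rcases lt_trichotomy c d with hcd | rfl | hcd
    · exact key' a b c d hab hcd
    · exact chainLHS_d2 hA2 a b c
    · rw [chainLHS_a2 hA2 a b c d, key' a b d c hab hcd]; ring
  · exact chainLHS_d1 hA1 a c d
  · rcases lt_trichotomy c d with hcd | rfl | hcd
    · rw [chainLHS_a1 hA1 a b c d, key' b a c d hab hcd]; ring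
    · exact chainLHS_d2 hA2 a b c
    · rw [chainLHS_a1 hA1 a b c d, chainLHS_a2 hA2 b a c d, key' b a d c hab hcd]; ring
end
end

section
/- Let (ε, W) be a Weyl candidate in dimension 6. Then for all a, b, e, f, g, c, d, h, i, j in Fin 6, writing x = ![a, b, e, f, g] and y = ![c, d, h, i, j] : Fin 5 → Fin 6: ∑_{σ, τ ∈ Equiv.Perm (Fin 5)} (sign σ) * (sign τ) * W (x (σ 0)) (x (σ 1)) (y (τ 0)) (y (τ 1)) * δ (x (σ 2)) (y (τ 2)) * δ (x (σ 3)) (y (τ 3)) * δ (x (σ 4)) (y (τ 4)) = 0. (This is the six-dimensional dimensionally dependent identity C^{[ab}_{[cd} δ^{efg]}_{hij]} = 0.) -/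
/-!
Seven indices cannot be antisymmetrized in dimension six: for all `p q r s` the generalized
Kronecker delta `δ^{x p q}_{y r s}`, a `7 × 7` determinant of deltas between six values,
vanishes, and hence so does its contraction with `W^{rs}_{pq}`. Expand the determinant over
`ρ ∈ S₇`. Terms in which `ρ` pairs one of `p, q` with one of `r, s` are traces of `W` and
vanish; the remaining `ρ` form a single double coset `S₅ ρ₀ S₅`. Antisymmetrizing also over the
positions of `x` and of `y`, each remaining term becomes the left-hand side, which is therefore
zero. The argument is the same for `n + 2` indices in dimension at most `n + 3`.
-/

noncomputable section

open Finset Equiv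

namespace DimensionallyDependentIdentity

variable {α ι : Type*}

theorem elim_vecCons_eq_of_ne_inr_zero (z : ι → α) (p p' q : α) {j : ι ⊕ Fin 2}
    (hj : j ≠ .inr 0) : Sum.elim z ![p, q] j = Sum.elim z ![p', q] j := by
  obtain (j | j) := j
  · rfl
  · fin_cases j
    · exact absurd rfl hj
    · rfl

theorem exists_sumCongr_one_eq_of_apply_inr {κ : Type*} [Finite ι] [Finite κ]
    {g : Perm (ι ⊕ κ)} (hg : ∀ k, g (.inr k) = .inr k) : ∃ σ : Perm ι, σ.sumCongr 1 = g := by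
  have hinr : Set.MapsTo g (Set.range Sum.inr) (Set.range Sum.inr) := by
    rintro _ ⟨k, rfl⟩
    exact ⟨k, (hg k).symm⟩
  obtain ⟨⟨σ, τ⟩, hστ⟩ :=
    Perm.mem_sumCongrHom_range_of_perm_mapsTo_inl ((Perm.perm_mapsTo_inl_iff_mapsTo_inr g).2 hinr)
  have hτ : τ = 1 := Equiv.ext fun k => by simpa [← hστ] using hg k
  exact ⟨σ, by rw [← hστ, hτ]; rfl⟩

variable [Fintype α] [DecidableEq α] [Fintype ι]

/-- The term of `W^{rs}_{pq} δ^{x p q}_{y r s}` belonging to the permutation `ρ` of the index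
slots `ι ⊕ Fin 2`, the upper indices being `Sum.elim x ![p, q]` and the lower `Sum.elim y ![r, s]`. -/
def deltaContraction (W : α → α → α → α → ℝ) (x y : ι → α) (ρ : Perm (ι ⊕ Fin 2)) : ℝ :=
  ∑ p, ∑ q, ∑ r, ∑ s, W r s p q *
    ∏ i, if Sum.elim x ![p, q] (ρ i) = Sum.elim y ![r, s] i then (1 : ℝ) else 0

variable {W : α → α → α → α → ℝ}

theorem deltaContraction_sumCongr (x y : ι → α) (σ τ : Perm ι) (ρ : Perm (ι ⊕ Fin 2)) :
    deltaContraction W x y (σ.sumCongr 1 * ρ * (τ.sumCongr 1)⁻¹) =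
      deltaContraction W (x ∘ σ) (y ∘ τ) ρ := by
  have hcomp (z : ι → α) (v : Fin 2 → α) (π : Perm ι) (i : ι ⊕ Fin 2) :
      Sum.elim z v (π.sumCongr 1 i) = Sum.elim (z ∘ π) v i := by
    obtain (i | i) := i <;> rfl
  unfold deltaContraction
  refine sum_congr rfl fun p _ => sum_congr rfl fun q _ => sum_congr rfl fun r _ =>
    sum_congr rfl fun s _ => congrArg (W r s p q * ·) ?_
  rw [← Equiv.prod_comp (τ.sumCongr 1)]
  simp only [Perm.mul_apply, Perm.coe_inv, symm_apply_apply, hcomp]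

variable [DecidableEq ι]

theorem sign_cast_mul_self (π : Perm ι) :
    ((Perm.sign π : ℤ) : ℝ) * ((Perm.sign π : ℤ) : ℝ) = 1 := by
  rw [← Int.cast_mul, ← Units.val_mul, Int.units_mul_self, Units.val_one, Int.cast_one]

theorem sum_sign_mul_comp_mul_right (f : Perm ι → ℝ) (π : Perm ι) :
    ∑ σ, ((Perm.sign σ : ℤ) : ℝ) * f (σ * π) =
      ((Perm.sign π : ℤ) : ℝ) * ∑ σ, ((Perm.sign σ : ℤ) : ℝ) * f σ := by
  conv_rhs => rw [← Equiv.sum_comp (Equiv.mulRight π), Finset.mul_sum]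
  refine sum_congr rfl fun σ _ => ?_
  simp only [coe_mulRight, Perm.sign_mul, Units.val_mul, Int.cast_mul]
  linear_combination (-((Perm.sign σ : ℤ) : ℝ) * f (σ * π)) * sign_cast_mul_self π

theorem sum_sign_mul_sign_mul_comp_mul_right (g : Perm ι → Perm ι → ℝ) (π π' : Perm ι) :
    ∑ σ, ∑ τ, ((Perm.sign σ : ℤ) : ℝ) * ((Perm.sign τ : ℤ) : ℝ) * g (σ * π) (τ * π') =
      ((Perm.sign π : ℤ) : ℝ) * ((Perm.sign π' : ℤ) : ℝ) *
        ∑ σ, ∑ τ, ((Perm.sign σ : ℤ) : ℝ) * ((Perm.sign τ : ℤ) : ℝ) * g σ τ := by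
  calc _ = ∑ σ, ((Perm.sign σ : ℤ) : ℝ) * (((Perm.sign π' : ℤ) : ℝ) *
          ∑ τ, ((Perm.sign τ : ℤ) : ℝ) * g (σ * π) τ) := by
        refine sum_congr rfl fun σ _ => ?_
        rw [← sum_sign_mul_comp_mul_right (g (σ * π)) π', Finset.mul_sum]
        simp only [mul_assoc]
    _ = ((Perm.sign π : ℤ) : ℝ) * ∑ σ, ((Perm.sign σ : ℤ) : ℝ) * (((Perm.sign π' : ℤ) : ℝ) *
          ∑ τ, ((Perm.sign τ : ℤ) : ℝ) * g σ τ) :=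
        sum_sign_mul_comp_mul_right (fun σ => _ * ∑ τ, ((Perm.sign τ : ℤ) : ℝ) * g σ τ) π
    _ = _ := by
        simp only [Finset.mul_sum]
        exact sum_congr rfl fun σ _ => sum_congr rfl fun τ _ => by ring

theorem sum_sign_mul_prod_ite_eq_zero {κ : Type*} [Fintype κ] [DecidableEq κ]
    (hcard : Fintype.card α < Fintype.card κ) (X Y : κ → α) :
    ∑ ρ : Perm κ, ((Perm.sign ρ : ℤ) : ℝ) * ∏ i, (if X (ρ i) = Y i then (1 : ℝ) else 0) = 0 := by
  obtain ⟨i, j, hij, hX⟩ := Fintype.exists_ne_map_eq_of_card_lt X hcard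
  have hdet : (Matrix.of fun k l => if X k = Y l then (1 : ℝ) else 0).det = 0 :=
    Matrix.det_zero_of_row_eq hij (funext fun l => by simp [hX])
  simpa [Matrix.det_apply'] using hdet

theorem sum_sign_mul_deltaContraction_eq_zero (hcard : Fintype.card α < Fintype.card ι + 2)
    (x y : ι → α) : ∑ ρ, ((Perm.sign ρ : ℤ) : ℝ) * deltaContraction W x y ρ = 0 := by
  have hcard' : Fintype.card α < Fintype.card (ι ⊕ Fin 2) := by simpa using hcard
  simp only [deltaContraction, Finset.mul_sum]
  rw [sum_comm]; refine sum_eq_zero fun p _ => ?_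
  rw [sum_comm]; refine sum_eq_zero fun q _ => ?_
  rw [sum_comm]; refine sum_eq_zero fun r _ => ?_
  rw [sum_comm]; refine sum_eq_zero fun s _ => ?_
  simp_rw [mul_left_comm _ (W r s p q), ← Finset.mul_sum,
    sum_sign_mul_prod_ite_eq_zero hcard', mul_zero]

theorem deltaContraction_swap_mul (hW : ∀ a b c d, W a b c d = -W a b d c) (x y : ι → α)
    (ρ : Perm (ι ⊕ Fin 2)) :
    deltaContraction W x y (swap (.inr 0) (.inr 1) * ρ) = -deltaContraction W x y ρ := by
  have hswap (p q : α) (i : ι ⊕ Fin 2) :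
      Sum.elim x ![p, q] (swap (.inr 0) (.inr 1) i) = Sum.elim x ![q, p] i := by
    obtain (i | i) := i
    · rw [swap_apply_of_ne_of_ne] <;> simp
    · fin_cases i <;> simp
  unfold deltaContraction
  rw [sum_comm, ← sum_neg_distrib]
  refine sum_congr rfl fun q _ => ?_
  rw [← sum_neg_distrib]
  refine sum_congr rfl fun p _ => ?_
  simp only [Perm.mul_apply, hswap, ← sum_neg_distrib, hW _ _ p q, neg_mul]

theorem deltaContraction_mul_swap (hW : ∀ a b c d, W a b c d = -W b a c d) (x y : ι → α)
    (ρ : Perm (ι ⊕ Fin 2)) :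
    deltaContraction W x y (ρ * swap (.inr 0) (.inr 1)) = -deltaContraction W x y ρ := by
  have hswap (r s : α) (i : ι ⊕ Fin 2) :
      Sum.elim y ![r, s] (swap (.inr 0) (.inr 1) i) = Sum.elim y ![s, r] i := by
    obtain (i | i) := i
    · rw [swap_apply_of_ne_of_ne] <;> simp
    · fin_cases i <;> simp
  unfold deltaContraction
  simp only [← sum_neg_distrib]
  refine sum_congr rfl fun p _ => sum_congr rfl fun q _ => ?_
  rw [sum_comm]
  refine sum_congr rfl fun s _ => sum_congr rfl fun r _ => ?_
  rw [← Equiv.prod_comp (swap (.inr 0) (.inr 1) : Perm (ι ⊕ Fin 2))]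
  simp only [Perm.mul_apply, swap_apply_self, hswap, hW r s, neg_mul]

theorem deltaContraction_eq_zero_of_apply_inr_zero (hW : ∀ s q, ∑ p, W p s p q = 0)
    (x y : ι → α) {ρ : Perm (ι ⊕ Fin 2)} (hρ : ρ (.inr 0) = .inr 0) :
    deltaContraction W x y ρ = 0 := by
  set P : α → α → α → α → ℝ := fun p q r s =>
    ∏ i, if Sum.elim x ![p, q] (ρ i) = Sum.elim y ![r, s] i then (1 : ℝ) else 0
  -- the factor of `P p q r s` at `inr 0` is `δ p r`, and no other factor involves `p` or `r`
  have hP_of_ne (p q r s : α) (hpr : r ≠ p) : P p q r s = 0 :=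
    prod_eq_zero (mem_univ (.inr 0)) (by simp [hρ, Ne.symm hpr])
  have hP_diag (p q s : α) : P p q p s = P q q q s := by
    refine prod_congr rfl fun i _ => ?_
    by_cases hi : i = .inr 0
    · simp [hi, hρ]
    · have hρi : ρ i ≠ .inr 0 := hρ ▸ ρ.injective.ne hi
      rw [elim_vecCons_eq_of_ne_inr_zero x p q q hρi, elim_vecCons_eq_of_ne_inr_zero y p q s hi]
  calc deltaContraction W x y ρ = ∑ p, ∑ q, ∑ r, ∑ s, W r s p q * P p q r s := rfl
    _ = ∑ p, ∑ q, ∑ s, W p s p q * P q q q s := by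
        refine sum_congr rfl fun p _ => sum_congr rfl fun q _ => ?_
        rw [sum_comm]
        refine sum_congr rfl fun s _ => ?_
        rw [sum_eq_single p (fun r _ hr => by rw [hP_of_ne p q r s hr, mul_zero])
          (fun h => absurd (mem_univ p) h), hP_diag]
    _ = 0 := by
        rw [sum_comm]
        refine sum_eq_zero fun q _ => ?_
        rw [sum_comm]
        exact sum_eq_zero fun s _ => by rw [← sum_mul, hW, zero_mul]

theorem deltaContraction_eq_zero_of_apply_inr (hanti₁ : ∀ a b c d, W a b c d = -W b a c d)
    (hanti₂ : ∀ a b c d, W a b c d = -W a b d c) (htrace : ∀ a c, ∑ i, W a i c i = 0)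
    (x y : ι → α) {ρ : Perm (ι ⊕ Fin 2)} {k l : Fin 2} (hρ : ρ (.inr k) = .inr l) :
    deltaContraction W x y ρ = 0 := by
  have htrace' (s q : α) : ∑ p, W p s p q = 0 := by
    rw [← htrace s q]
    exact sum_congr rfl fun p _ => by rw [hanti₁ p s, hanti₂ s p, neg_neg]
  have h₀ {ρ' : Perm (ι ⊕ Fin 2)} (h : ρ' (.inr 0) = .inr 0) : deltaContraction W x y ρ' = 0 :=
    deltaContraction_eq_zero_of_apply_inr_zero htrace' x y h
  fin_cases k <;> fin_cases l <;> simp only [Fin.zero_eta, Fin.mk_one] at hρ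
  · exact h₀ hρ
  · have := h₀ (ρ' := swap (.inr 0) (.inr 1) * ρ) (by simp [hρ])
    rwa [deltaContraction_swap_mul hanti₂, neg_eq_zero] at this
  · have := h₀ (ρ' := ρ * swap (.inr 0) (.inr 1)) (by simp [hρ])
    rwa [deltaContraction_mul_swap hanti₁, neg_eq_zero] at this
  · have := h₀ (ρ' := swap (.inr 0) (.inr 1) * ρ * swap (.inr 0) (.inr 1)) (by simp [hρ])
    rwa [deltaContraction_mul_swap hanti₁, deltaContraction_swap_mul hanti₂, neg_neg] at this

def antisymmetrizedContraction (W : α → α → α → α → ℝ) (x y : ι → α) (ρ : Perm (ι ⊕ Fin 2)) :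
    ℝ :=
  ∑ σ : Perm ι, ∑ τ : Perm ι,
    ((Perm.sign σ : ℤ) : ℝ) * ((Perm.sign τ : ℤ) : ℝ) * deltaContraction W (x ∘ σ) (y ∘ τ) ρ

theorem sum_sign_mul_antisymmetrizedContraction_eq_zero
    (hcard : Fintype.card α < Fintype.card ι + 2) (x y : ι → α) :
    ∑ ρ, ((Perm.sign ρ : ℤ) : ℝ) * antisymmetrizedContraction W x y ρ = 0 := by
  simp only [antisymmetrizedContraction, Finset.mul_sum]
  rw [sum_comm]; refine sum_eq_zero fun σ _ => ?_
  rw [sum_comm]; refine sum_eq_zero fun τ _ => ?_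
  simp_rw [mul_left_comm _ (_ * _ : ℝ), ← Finset.mul_sum,
    sum_sign_mul_deltaContraction_eq_zero hcard, mul_zero]

theorem antisymmetrizedContraction_eq_zero_of_apply_inr
    (hanti₁ : ∀ a b c d, W a b c d = -W b a c d) (hanti₂ : ∀ a b c d, W a b c d = -W a b d c)
    (htrace : ∀ a c, ∑ i, W a i c i = 0) (x y : ι → α) {ρ : Perm (ι ⊕ Fin 2)} {k l : Fin 2}
    (hρ : ρ (.inr k) = .inr l) : antisymmetrizedContraction W x y ρ = 0 :=
  sum_eq_zero fun _ _ => sum_eq_zero fun _ _ => by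
    rw [deltaContraction_eq_zero_of_apply_inr hanti₁ hanti₂ htrace _ _ hρ, mul_zero]

theorem antisymmetrizedContraction_sumCongr (x y : ι → α) (σ τ : Perm ι)
    (ρ : Perm (ι ⊕ Fin 2)) :
    antisymmetrizedContraction W x y (σ.sumCongr 1 * ρ * (τ.sumCongr 1)⁻¹) =
      ((Perm.sign σ : ℤ) : ℝ) * ((Perm.sign τ : ℤ) : ℝ) * antisymmetrizedContraction W x y ρ := by
  simp only [antisymmetrizedContraction, deltaContraction_sumCongr, Function.comp_assoc]
  exact sum_sign_mul_sign_mul_comp_mul_right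
    (fun σ' τ' => deltaContraction W (x ∘ σ') (y ∘ τ') ρ) σ τ

variable {n : ℕ}

def pairExchange (n : ℕ) : Perm (Fin (n + 2) ⊕ Fin 2) :=
  swap (.inl 0) (.inr 0) * swap (.inl 1) (.inr 1)

theorem sign_pairExchange : Perm.sign (pairExchange n) = 1 := by
  simp [pairExchange, Perm.sign_mul]

theorem deltaContraction_pairExchange (x y : Fin (n + 2) → α) :
    deltaContraction W x y (pairExchange n) = W (x 0) (x 1) (y 0) (y 1) *
      ∏ k : Fin n, if x k.succ.succ = y k.succ.succ then (1 : ℝ) else 0 := by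
  simp [deltaContraction, pairExchange, Fintype.prod_sum_type, Fin.prod_univ_succ,
    swap_apply_of_ne_of_ne, Fin.succ_succ_ne_one]

theorem exists_eq_sumCongr_mul_pairExchange_mul {ρ : Perm (Fin (n + 2) ⊕ Fin 2)}
    (hρ : ∀ k, (ρ (.inr k)).isLeft) :
    ∃ σ τ : Perm (Fin (n + 2)), ρ = σ.sumCongr 1 * pairExchange n * (τ.sumCongr 1)⁻¹ := by
  have hpreimage (k : Fin 2) : ∃ c, ρ (.inl c) = .inr k := by
    obtain ⟨c | l, hc⟩ : ∃ j, ρ j = .inr k := ρ.surjective _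
    · exact ⟨c, hc⟩
    · simpa [hc] using hρ l
  obtain ⟨c, hc⟩ := hpreimage 0
  obtain ⟨d, hd⟩ := hpreimage 1
  have hcd : c ≠ d := fun h => by simp [h, hd] at hc
  obtain ⟨τ, hτc, hτd⟩ := MulAction.is_two_pretransitive_iff.1
    (Perm.isMultiplyPretransitive (Fin (n + 2)) 2) (zero_ne_one' (Fin (n + 2))) hcd
  obtain ⟨σ, hσ⟩ := exists_sumCongr_one_eq_of_apply_inr
    (g := ρ * τ.sumCongr 1 * (pairExchange n)⁻¹)
    (fun k => by fin_cases k <;> simp_all [pairExchange, Perm.smul_def, swap_apply_of_ne_of_ne])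
  exact ⟨σ, τ, by rw [hσ]; group⟩

theorem sign_mul_antisymmetrizedContraction (hanti₁ : ∀ a b c d, W a b c d = -W b a c d)
    (hanti₂ : ∀ a b c d, W a b c d = -W a b d c) (htrace : ∀ a c, ∑ i, W a i c i = 0)
    (x y : Fin (n + 2) → α) (ρ : Perm (Fin (n + 2) ⊕ Fin 2)) :
    ((Perm.sign ρ : ℤ) : ℝ) * antisymmetrizedContraction W x y ρ =
      if ∀ k, (ρ (.inr k)).isLeft then antisymmetrizedContraction W x y (pairExchange n)
      else 0 := by
  split_ifs with hρ
  · obtain ⟨σ, τ, rfl⟩ := exists_eq_sumCongr_mul_pairExchange_mul hρ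
    simp only [antisymmetrizedContraction_sumCongr, Perm.sign_mul, Perm.sign_inv,
      Perm.sign_sumCongr, sign_pairExchange, Perm.sign_one, mul_one, Units.val_mul, Int.cast_mul]
    linear_combination antisymmetrizedContraction W x y (pairExchange n) *
      (((Perm.sign τ : ℤ) : ℝ) * ((Perm.sign τ : ℤ) : ℝ) * sign_cast_mul_self σ +
        sign_cast_mul_self τ)
  · obtain ⟨k, hk⟩ := not_forall.1 hρ
    rcases h : ρ (.inr k) with j | l
    · simp [h] at hk
    · rw [antisymmetrizedContraction_eq_zero_of_apply_inr hanti₁ hanti₂ htrace x y h, mul_zero]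

theorem antisymmetrizedContraction_pairExchange_eq_zero (hcard : Fintype.card α < n + 4)
    (hanti₁ : ∀ a b c d, W a b c d = -W b a c d) (hanti₂ : ∀ a b c d, W a b c d = -W a b d c)
    (htrace : ∀ a c, ∑ i, W a i c i = 0) (x y : Fin (n + 2) → α) :
    antisymmetrizedContraction W x y (pairExchange n) = 0 := by
  have h := sum_sign_mul_antisymmetrizedContraction_eq_zero (W := W) (by simpa using hcard) x y
  simp only [sign_mul_antisymmetrizedContraction hanti₁ hanti₂ htrace, sum_ite, sum_const_zero,
    add_zero, sum_const, nsmul_eq_mul] at h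
  refine (mul_eq_zero.1 h).resolve_left (Nat.cast_ne_zero.2 (card_ne_zero.2 ⟨pairExchange n, ?_⟩))
  simp [pairExchange, swap_apply_of_ne_of_ne]

theorem antisymmetrized_weyl_mul_delta_eq_zero (hcard : Fintype.card α < n + 4)
    (hanti₁ : ∀ a b c d, W a b c d = -W b a c d) (hanti₂ : ∀ a b c d, W a b c d = -W a b d c)
    (htrace : ∀ a c, ∑ i, W a i c i = 0) (x y : Fin (n + 2) → α) :
    ∑ σ : Perm (Fin (n + 2)), ∑ τ : Perm (Fin (n + 2)),
      ((Perm.sign σ : ℤ) : ℝ) * ((Perm.sign τ : ℤ) : ℝ) *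
        (W (x (σ 0)) (x (σ 1)) (y (τ 0)) (y (τ 1)) *
          ∏ k : Fin n, if x (σ k.succ.succ) = y (τ k.succ.succ) then (1 : ℝ) else 0) = 0 := by
  simpa [antisymmetrizedContraction, deltaContraction_pairExchange] using
    antisymmetrizedContraction_pairExchange_eq_zero hcard hanti₁ hanti₂ htrace x y

end DimensionallyDependentIdentity

/-- The six-dimensional dimensionally dependent identity `C^{[ab}{}_{[cd} δ^{efg]}_{hij]} = 0`. -/
theorem dim6_identity (ε : Fin 6 → ℝ) (W : Fin 6 → Fin 6 → Fin 6 → Fin 6 → ℝ)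
    (hW : IsWeylCandidate ε W) (a b e f g c d h i j : Fin 6) :
    ∑ σ : Equiv.Perm (Fin 5), ∑ τ : Equiv.Perm (Fin 5),
      ((Equiv.Perm.sign σ : ℤ) : ℝ) * ((Equiv.Perm.sign τ : ℤ) : ℝ) *
        W (![a, b, e, f, g] (σ 0)) (![a, b, e, f, g] (σ 1))
          (![c, d, h, i, j] (τ 0)) (![c, d, h, i, j] (τ 1)) *
        (if ![a, b, e, f, g] (σ 2) = ![c, d, h, i, j] (τ 2) then (1 : ℝ) else 0) *
        (if ![a, b, e, f, g] (σ 3) = ![c, d, h, i, j] (τ 3) then (1 : ℝ) else 0) *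
        (if ![a, b, e, f, g] (σ 4) = ![c, d, h, i, j] (τ 4) then (1 : ℝ) else 0) = 0 := by
  obtain ⟨-, hanti₁, hanti₂, htrace, -, -⟩ := hW
  have hsum := DimensionallyDependentIdentity.antisymmetrized_weyl_mul_delta_eq_zero (n := 3)
    (by simp) hanti₁ hanti₂ htrace ![a, b, e, f, g] ![c, d, h, i, j]
  simp only [Fin.prod_univ_three, mul_assoc] at hsum ⊢
  exact hsum
end
end

section
/- There exists a Weyl candidate (ε, W) in dimension 5 such that (∑_{a,b,c,d} W a b c d * W c d a b)^2 - 4 * ∑_{q,g,i,p,d,a,b,c} W q g i p * W i p q d * W a b c g * W c d a b ≠ 0. (That is, the right-hand side scalar of the five-dimensional quartic identity is not identically zero on Weyl candidates.) -/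
noncomputable section

open Finset

/- Auxiliary integer-valued tensor. -/
def myKd (a b : Fin 5) : ℤ := if a = b then 1 else 0
def myF (a b : Fin 5) : ℤ := if a = 0 ∧ b = 1 then 1 else if a = 1 ∧ b = 0 then -1 else 0
def myH (a : Fin 5) : ℤ := if a = 0 ∨ a = 1 then 3 else -1
def myWz (a b c d : Fin 5) : ℤ :=
  12 * myF a b * myF c d -
    (myH a * myKd a c * myKd b d + myH b * myKd b d * myKd a c
      - myH a * myKd a d * myKd b c - myH b * myKd b c * myKd a d)

def myAz (g d : Fin 5) : ℤ := ∑ q, ∑ i, ∑ p, myWz q g i p * myWz i p q d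
def myBz (g d : Fin 5) : ℤ := ∑ a, ∑ b, ∑ c, myWz a b c g * myWz c d a b
def myXz : ℤ := ∑ a, ∑ b, ∑ c, ∑ d, myWz a b c d * myWz c d a b
def myTz : ℤ := ∑ g, ∑ d, myAz g d * myBz g d

lemma my_sum_comm4 {M : Type*} [AddCommMonoid M] (f : Fin 5 → Fin 5 → Fin 5 → Fin 5 → M) :
    (∑ a, ∑ b, ∑ c, ∑ d, f a b c d) = ∑ d, ∑ a, ∑ b, ∑ c, f a b c d := by
  calc (∑ a, ∑ b, ∑ c, ∑ d, f a b c d)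
      = ∑ a, ∑ b, ∑ d, ∑ c, f a b c d :=
        Finset.sum_congr rfl fun a _ => Finset.sum_congr rfl fun b _ => Finset.sum_comm
    _ = ∑ a, ∑ d, ∑ b, ∑ c, f a b c d :=
        Finset.sum_congr rfl fun a _ => Finset.sum_comm
    _ = ∑ d, ∑ a, ∑ b, ∑ c, f a b c d := Finset.sum_comm

lemma my_key (f : Fin 5 → Fin 5 → Fin 5 → Fin 5 → ℝ) :
    (∑ q, ∑ g, ∑ i, ∑ p, ∑ d, ∑ a, ∑ b, ∑ c,
        f q g i p * f i p q d * f a b c g * f c d a b)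
      = ∑ g, ∑ d, (∑ q, ∑ i, ∑ p, f q g i p * f i p q d) *
          (∑ a, ∑ b, ∑ c, f a b c g * f c d a b) := by
  rw [Finset.sum_comm]
  refine Finset.sum_congr rfl fun g _ => ?_
  rw [my_sum_comm4 (fun q i p d => ∑ a, ∑ b, ∑ c,
    f q g i p * f i p q d * f a b c g * f c d a b)]
  refine Finset.sum_congr rfl fun d _ => ?_
  simp only [mul_assoc, ← Finset.mul_sum]
  simp only [← mul_assoc, ← Finset.sum_mul]

/-- The right-hand side scalar of the five-dimensional quartic identity is not identically
zero on Weyl candidates. -/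
theorem dim5_quartic_scalar_nonzero :
    ∃ (ε : Fin 5 → ℝ) (W : Fin 5 → Fin 5 → Fin 5 → Fin 5 → ℝ),
      IsWeylCandidate ε W ∧
      (∑ a, ∑ b, ∑ c, ∑ d, W a b c d * W c d a b) ^ 2
        - 4 * (∑ q, ∑ g, ∑ i, ∑ p, ∑ d, ∑ a, ∑ b, ∑ c,
            W q g i p * W i p q d * W a b c g * W c d a b) ≠ 0 := by
  have h1 : ∀ a b c d : Fin 5, myWz a b c d = -(myWz b a c d) := by decide
  have h2 : ∀ a b c d : Fin 5, myWz a b c d = -(myWz a b d c) := by decide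
  have h3 : ∀ a c : Fin 5, (∑ i, myWz a i c i) = 0 := by decide
  have h4 : ∀ a b c d : Fin 5, myWz a b c d = myWz c d a b := by decide
  have h5 : ∀ a b c d : Fin 5, myWz a b c d + myWz a c d b + myWz a d b c = 0 := by decide
  have hnum : myXz ^ 2 - 4 * myTz ≠ 0 := by decide
  refine ⟨fun _ => 1, fun a b c d => ((myWz a b c d : ℤ) : ℝ), ⟨fun i => Or.inl rfl,
    ?_, ?_, ?_, ?_, ?_⟩, ?_⟩
  · intro a b c d; beta_reduce; exact_mod_cast h1 a b c d
  · intro a b c d; beta_reduce; exact_mod_cast h2 a b c d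
  · intro a c
    beta_reduce
    have : ((∑ i, myWz a i c i : ℤ) : ℝ) = 0 := by rw [h3 a c]; norm_num
    simpa [Int.cast_sum] using this
  · intro a b c d
    beta_reduce
    simp only [one_mul]
    exact_mod_cast h4 a b c d
  · intro a b c d
    beta_reduce
    simp only [one_mul]
    exact_mod_cast h5 a b c d
  · beta_reduce
    rw [my_key (fun a b c d => ((myWz a b c d : ℤ) : ℝ))]
    have hA : ∀ g d : Fin 5,
        (∑ q, ∑ i, ∑ p, ((myWz q g i p : ℤ) : ℝ) * ((myWz i p q d : ℤ) : ℝ))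
          = ((myAz g d : ℤ) : ℝ) := by
      intro g d; rw [myAz]; push_cast; rfl
    have hB : ∀ g d : Fin 5,
        (∑ a, ∑ b, ∑ c, ((myWz a b c g : ℤ) : ℝ) * ((myWz c d a b : ℤ) : ℝ))
          = ((myBz g d : ℤ) : ℝ) := by
      intro g d; rw [myBz]; push_cast; rfl
    have hX : (∑ a, ∑ b, ∑ c, ∑ d, ((myWz a b c d : ℤ) : ℝ) * ((myWz c d a b : ℤ) : ℝ))
        = ((myXz : ℤ) : ℝ) := by rw [myXz]; push_cast; rfl
    simp only [hA, hB, hX]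
    have hT : (∑ g, ∑ d, ((myAz g d : ℤ) : ℝ) * ((myBz g d : ℤ) : ℝ))
        = ((myTz : ℤ) : ℝ) := by rw [myTz]; push_cast; rfl
    rw [hT]
    have : ((myXz ^ 2 - 4 * myTz : ℤ) : ℝ) ≠ 0 := by exact_mod_cast hnum
    push_cast at this
    convert this using 2
end
end

section
/- Let n ≤ 6 and let H : Fin n → Fin n → Fin n → Fin n → Fin n → Fin n → ℝ (representing the mixed components H_{abc}^{def} of a double three-form) be totally antisymmetric in its first three arguments, totally antisymmetric in its last three arguments, and trace-free, i.e. ∀ a b d e, ∑ i, H a b i d e i = 0. Then for all j, k in Fin n: ∑_{a,b,d,e,f} H a b k d e f * H d e f a b j = δ j k * (1/6) * ∑_{a,b,c,d,e,f} H a b c d e f * H d e f a b c. (This is Lovelock's identity H_{abk}^{def} H_{def}^{abj} = (1/6) δ^j_k H_{abc}^{def} H_{def}^{abc} for trace-free double three-forms in six dimensions and lower.) -/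
/-!
In dimension `n ≤ 2m` every antisymmetrisation over `2m + 1` indices vanishes, since two of the
indices must coincide. Apply this to `δ^{j a}_{k b} H_{a'}^{b'} H_{a''}^{b''}`, where `a = a' a''`
and `b = b' b''` are the `2m` summation indices of two copies of the double `m`-form. Expanding
the antisymmetrisation along the slot of `j` gives `δ^j_k` times a `2m`-index antisymmetrisation,
minus `2m` of them in which `j` and `k` have traded places with a summation index. In each of these,
a permutation sending an upper index of one copy of `H` to a lower index of the same copy produces
a trace of `H`, which vanishes; the survivors are the `(m!)²` permutations exchanging the two
copies, and they all contribute the same term. What is left is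
`±(m!)² (δ^j_k H_{a}^{b} H_{b}^{a} - 2m H_{a k}^{b} H_{b}^{a j}) = 0`.
-/

open Finset Function Equiv Set Sum

namespace Equiv.Perm

section

variable {ι α M : Type*} [Fintype ι] [DecidableEq ι] [AddCommGroup M]

theorem sum_sign_smul_comp_eq_zero {u : ι → α} (hu : ¬Injective u) (W : (ι → α) → M) :
    ∑ σ : Perm ι, sign σ • W (u ∘ σ) = 0 := by
  obtain ⟨i, i', hu, hii'⟩ : ∃ i i', u i = u i' ∧ i ≠ i' := by
    simpa [Injective] using hu
  refine sum_involution (fun σ _ => swap i i' * σ) (fun σ _ => ?_)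
    (fun σ _ _ => (not_congr swap_mul_eq_iff).mpr hii') (fun _ _ => mem_univ _)
    (fun σ _ => swap_mul_involutive i i' σ)
  have hus : u ∘ ⇑(swap i i' * σ) = u ∘ σ := by
    ext x; simp [apply_swap_eq_self hu]
  rw [hus]
  simp [sign_swap hii']

theorem sum_sign_smul_perm_option {β : Type*} [Fintype β] [DecidableEq β]
    (f : Perm (Option β) → M) :
    ∑ σ, sign σ • f σ =
      ∑ τ : Perm β, sign τ • (f τ.optionCongr - ∑ b, f (swap none (some b) * τ.optionCongr)) := by
  rw [← decomposeOption.symm.sum_comp, Fintype.sum_prod_type, Finset.sum_comm]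
  refine sum_congr rfl fun τ _ => ?_
  simp [Fintype.sum_option, ← one_def, Finset.smul_sum, sub_eq_add_neg]

end

theorem exists_isLeft_eq_of_not_mapsTo {β : Type*} [Finite β] {τ : Perm (β ⊕ β)}
    (h : ¬MapsTo τ (range inl) (range inr)) (b : Bool) :
    ∃ x, x.isLeft = b ∧ (τ x).isLeft = b := by
  cases b
  · have h' : ¬MapsTo τ (range inr) (range inl) := fun hτ => h <| by
      have hτ' : MapsTo ⇑(τ * sumComm β β) (range inl) (range inl) := by
        rintro _ ⟨t, rfl⟩; exact hτ ⟨t, rfl⟩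
      rintro _ ⟨t, rfl⟩
      exact (perm_mapsTo_inl_iff_mapsTo_inr _).mp hτ' ⟨t, rfl⟩
    simp only [MapsTo, Set.mem_range, not_forall] at h'
    obtain ⟨_, ⟨t, rfl⟩, ht⟩ := h'
    exact ⟨inr t, rfl, by cases hx : τ (inr t) <;> simp_all⟩
  · simp only [MapsTo, Set.mem_range, not_forall] at h
    obtain ⟨_, ⟨t, rfl⟩, ht⟩ := h
    exact ⟨inl t, rfl, by cases hx : τ (inl t) <;> simp_all⟩

theorem sum_eq_card_sq_smul_of_sumCongr_invariant {β M : Type*} [Fintype β] [DecidableEq β]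
    [AddCommMonoid M] (F : Perm (β ⊕ β) → M)
    (hF : ∀ (τ : Perm (β ⊕ β)) (σ₁ σ₂ : Perm β), F (τ * sumCongr σ₁ σ₂) = F τ)
    (h0 : ∀ τ : Perm (β ⊕ β), ¬MapsTo τ (range inl) (range inr) → F τ = 0) :
    ∑ τ, F τ = Fintype.card (Perm β) ^ 2 • F (sumComm β β) := by
  rw [← Equiv.sum_comp (Equiv.mulLeft (sumComm β β : Perm (β ⊕ β)))]
  rw [← Fintype.sum_of_injective (sumCongrHom β β) sumCongrHom_injective
    (fun σ => F (sumComm β β * sumCongr σ.1 σ.2)) _ ?_ (fun _ => rfl)]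
  · simp [hF, sq]
  · intro ρ hρ
    refine h0 _ fun hmaps => hρ (mem_sumCongrHom_range_of_perm_mapsTo_inl ?_)
    rintro _ ⟨t, rfl⟩
    obtain ⟨s, hs⟩ := hmaps ⟨t, rfl⟩
    exact ⟨s, by simpa [eq_comm] using congrArg (sumComm β β) hs⟩

end Equiv.Perm

theorem Function.update_eq_update_comp_swap {ι β : Type*} [DecidableEq ι] (f : ι → β)
    (s s₀ : ι) (c : β) :
    update f s c = update (f ∘ Equiv.swap s s₀) s₀ c ∘ Equiv.swap s s₀ := by
  rw [update_comp_equiv, symm_swap, swap_apply_right]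
  congr 1
  ext x
  simp

theorem Fintype.sum_eq_zero_of_sum_update_eq_zero {ι β M : Type*} [DecidableEq ι] [Fintype ι]
    [Fintype β] [AddCommMonoid M] (y : ι) (F : (ι → β) → M)
    (h : ∀ w, ∑ c, F (update w y c) = 0) : ∑ w, F w = 0 := by
  rw [← (funSplitAt y β).symm.sum_comp, Fintype.sum_prod_type, Finset.sum_comm]
  refine Finset.sum_eq_zero fun g _ => ?_
  rcases isEmpty_or_nonempty β with hβ | ⟨⟨c₀⟩⟩
  · simp
  · refine (Finset.sum_congr rfl fun c _ => congrArg F ?_).trans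
      (h ((funSplitAt y β).symm (c₀, g)))
    ext x
    by_cases hx : x = y <;> simp [funSplitAt, piSplitAt, hx]

theorem Fintype.sum_sum_arrow_eq_sum_elim {β γ δ M : Type*} [Fintype β] [Fintype γ] [Fintype δ]
    [DecidableEq β] [DecidableEq γ] [AddCommMonoid M] (F : (β ⊕ γ → δ) → M) :
    ∑ w, F w = ∑ p, ∑ q, F (Sum.elim p q) := by
  rw [← (sumArrowEquivProdArrow β γ δ).symm.sum_comp, Fintype.sum_prod_type]
  rfl

theorem Fintype.sum_fin_succ_arrow {n : ℕ} {β M : Type*} [Fintype β] [AddCommMonoid M]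
    (F : (Fin (n + 1) → β) → M) : ∑ p, F p = ∑ a, ∑ p, F (Matrix.vecCons a p) := by
  rw [← (Fin.consEquiv fun _ => β).sum_comp, Fintype.sum_prod_type]
  rfl

open Equiv.Perm

/- A double `m`-form on the index type `α` is a map `K : (Fin m → α) → (Fin m → α) → R`,
`K p r` standing for `K_{p₀…pₘ₋₁}^{r₀…rₘ₋₁}`. -/

namespace DoubleForm

variable {α R : Type*} [CommRing R] {m : ℕ}

def IsAntisymmLower (K : (Fin m → α) → (Fin m → α) → R) : Prop :=
  ∀ (ρ : Perm (Fin m)) p r, K (p ∘ ρ) r = sign ρ • K p r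

def IsAntisymmUpper (K : (Fin m → α) → (Fin m → α) → R) : Prop :=
  ∀ (ρ : Perm (Fin m)) p r, K p (r ∘ ρ) = sign ρ • K p r

def tensorSq (K : (Fin m → α) → (Fin m → α) → R) (w v : Fin m ⊕ Fin m → α) : R :=
  K (w ∘ inl) (v ∘ inl) * K (w ∘ inr) (v ∘ inr)

theorem tensorSq_comp_mul_sumCongr {K : (Fin m → α) → (Fin m → α) → R}
    (hK₂ : IsAntisymmUpper K) (w v : Fin m ⊕ Fin m → α) (τ : Perm (Fin m ⊕ Fin m))
    (σ₁ σ₂ : Perm (Fin m)) :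
    tensorSq K w (v ∘ ⇑(τ * σ₁.sumCongr σ₂)) = (sign σ₁ * sign σ₂) • tensorSq K w (v ∘ τ) := by
  change K _ ((v ∘ τ ∘ inl) ∘ σ₁) * K _ ((v ∘ τ ∘ inr) ∘ σ₂) = _
  rw [hK₂, hK₂, smul_mul_smul_comm, tensorSq]
  rfl

variable [Fintype α] (K : (Fin m → α) → (Fin m → α) → R)

def IsTraceFree : Prop :=
  ∀ p r s t, ∑ c, K (update p s c) (update r t c) = 0

/-- `φ` carries the Kronecker factor and `ψ` the substitution of `j` for a summation index that
the Laplace expansion in `sum_sign_smul_contraction_sub_eq_zero` produces. -/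
def contraction (φ : (Fin m ⊕ Fin m → α) → R) (ψ : (Fin m ⊕ Fin m → α) → Fin m ⊕ Fin m → α)
    (τ : Perm (Fin m ⊕ Fin m)) : R :=
  ∑ w, φ w * tensorSq K w (ψ w ∘ τ)

def fullContraction : R :=
  ∑ p, ∑ q, K p q * K q p

variable {K}

theorem IsTraceFree.of_sum_update (hK₁ : IsAntisymmLower K) (hK₂ : IsAntisymmUpper K)
    (s₀ t₀ : Fin m) (h : ∀ p r, ∑ c, K (update p s₀ c) (update r t₀ c) = 0) :
    IsTraceFree K := by
  intro p r s t
  simp_rw [update_eq_update_comp_swap p s s₀, update_eq_update_comp_swap r t t₀, hK₁ _ _ _,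
    hK₂ _ _ _, ← smul_sum, h, smul_zero]

theorem sum_tensorSq_update_eq_zero (hK : IsTraceFree K) {x y : Fin m ⊕ Fin m}
    (hxy : x.isLeft = y.isLeft) (w v : Fin m ⊕ Fin m → α) :
    ∑ c, tensorSq K (update w y c) (update v x c) = 0 := by
  rcases x with t | t <;> rcases y with t' | t' <;> cases hxy
  · simp_rw [tensorSq, update_comp_eq_of_injective _ inl_injective,
      update_comp_eq_of_forall_ne _ _ fun _ => inr_ne_inl, ← sum_mul, hK _ _ t' t, zero_mul]
  · simp_rw [tensorSq, update_comp_eq_of_injective _ inr_injective,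
      update_comp_eq_of_forall_ne _ _ fun _ => inl_ne_inr, ← mul_sum, hK _ _ t' t, mul_zero]

theorem sign_smul_contraction_mul_sumCongr (hK₂ : IsAntisymmUpper K) (φ ψ)
    (τ : Perm (Fin m ⊕ Fin m)) (σ₁ σ₂ : Perm (Fin m)) :
    sign (τ * σ₁.sumCongr σ₂) • contraction K φ ψ (τ * σ₁.sumCongr σ₂) =
      sign τ • contraction K φ ψ τ := by
  have hs : sign σ₁ * sign σ₂ * (sign σ₁ * sign σ₂) = 1 := Int.units_mul_self _
  simp_rw [contraction, tensorSq_comp_mul_sumCongr hK₂, mul_smul_comm, ← smul_sum, smul_smul,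
    map_mul, sign_sumCongr]
  rw [mul_assoc, hs, mul_one]

theorem contraction_eq_zero (hK : IsTraceFree K) {φ ψ} (b : Bool)
    (hφ : ∀ w y c, y.isLeft = b → φ (update w y c) = φ w)
    (hψ : ∀ w y c, y.isLeft = b → ψ (update w y c) = update (ψ w) y c)
    {τ : Perm (Fin m ⊕ Fin m)} {x : Fin m ⊕ Fin m} (hx : x.isLeft = b) (hτx : (τ x).isLeft = b) :
    contraction K φ ψ τ = 0 := by
  refine Fintype.sum_eq_zero_of_sum_update_eq_zero (τ x) _ fun w => ?_
  simp_rw [hφ _ _ _ hτx, hψ _ _ _ hτx, update_comp_equiv, symm_apply_apply, ← mul_sum]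
  rw [sum_tensorSq_update_eq_zero hK (hx.trans hτx.symm), mul_zero]

theorem sum_sign_smul_contraction (hK₂ : IsAntisymmUpper K) (hK : IsTraceFree K) {φ ψ}
    (b : Bool) (hφ : ∀ w y c, y.isLeft = b → φ (update w y c) = φ w)
    (hψ : ∀ w y c, y.isLeft = b → ψ (update w y c) = update (ψ w) y c) :
    ∑ τ, sign τ • contraction K φ ψ τ =
      m.factorial ^ 2 • sign (sumComm (Fin m) (Fin m)) • contraction K φ ψ (sumComm _ _) := by
  rw [sum_eq_card_sq_smul_of_sumCongr_invariant _ (sign_smul_contraction_mul_sumCongr hK₂ φ ψ),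
    Fintype.card_perm, Fintype.card_fin]
  intro τ hτ
  obtain ⟨x, hx, hτx⟩ := exists_isLeft_eq_of_not_mapsTo hτ b
  rw [contraction_eq_zero hK b hφ hψ hx hτx, smul_zero]

theorem contraction_sumComm_const_id (c : R) :
    contraction K (fun _ => c) id (sumComm _ _) = c * fullContraction K := by
  simp only [contraction, Fintype.sum_sum_arrow_eq_sum_elim, fullContraction, mul_sum]
  rfl

variable [DecidableEq α]

variable (K) in
def partialContraction (i : Fin m) (j k : α) : R :=
  ∑ p, ∑ q, (if p i = k then 1 else 0) * (K p q * K q (update p i j))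

/-- The Laplace expansion, along the slot of `j`, of an antisymmetrisation over `2m + 1` indices
taking at most `2m` values. -/
theorem sum_sign_smul_contraction_sub_eq_zero (hn : Fintype.card α ≤ 2 * m) (j k : α) :
    ∑ τ, sign τ • (contraction K (fun _ => if j = k then 1 else 0) id τ -
      ∑ b, contraction K (fun w => if w b = k then 1 else 0) (fun w => update w b j) τ) = 0 := by
  have h1 : ∀ (w : Fin m ⊕ Fin m → α) (τ : Perm (Fin m ⊕ Fin m)),
      Option.elim' j w ∘ ⇑τ.optionCongr = Option.elim' j (w ∘ τ) := by
    intro w τ; ext (_ | _) <;> rfl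
  have h2 : ∀ (w : Fin m ⊕ Fin m → α) (τ : Perm (Fin m ⊕ Fin m)) b,
      Option.elim' j w ∘ ⇑(Equiv.swap none (some b) * τ.optionCongr : Perm (Option _)) =
        Option.elim' (w b) (update w b j ∘ τ) := by
    intro w τ b; ext (_ | c)
    · simp
    · by_cases hc : τ c = b <;> simp [hc, swap_apply_of_ne_of_ne]
  have hx : ∀ w : Fin m ⊕ Fin m → α, ¬Injective (Option.elim' j w) := fun w h => by
    have := Fintype.card_le_of_injective _ h
    simp only [Fintype.card_option, Fintype.card_sum, Fintype.card_fin] at this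
    omega
  have hw := fun w => sum_sign_smul_comp_eq_zero (hx w) fun v =>
    (if v none = k then (1 : R) else 0) * tensorSq K w (v ∘ some)
  have hsome : ∀ (a : α) (f : Fin m ⊕ Fin m → α), Option.elim' a f ∘ some = f := fun _ _ => rfl
  simp only [sum_sign_smul_perm_option, h1, h2, Option.elim'_none, hsome] at hw
  have hsum := Finset.sum_eq_zero (s := univ) fun w _ => hw w
  rw [Finset.sum_comm] at hsum
  refine Eq.trans (sum_congr rfl fun τ _ => ?_) hsum
  rw [← smul_sum, sum_sub_distrib, Finset.sum_comm (s := univ) (t := univ)]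
  rfl

theorem sum_sign_smul_contraction_update (hK₂ : IsAntisymmUpper K) (hK : IsTraceFree K)
    (b : Fin m ⊕ Fin m) (j k : α) :
    ∑ τ, sign τ • contraction K (fun w => if w b = k then 1 else 0) (fun w => update w b j) τ =
      m.factorial ^ 2 • sign (sumComm (Fin m) (Fin m)) •
        contraction K (fun w => if w b = k then 1 else 0) (fun w => update w b j)
          (sumComm _ _) := by
  have hyb : ∀ y : Fin m ⊕ Fin m, y.isLeft = !b.isLeft → y ≠ b := by
    rintro y hy rfl
    cases y <;> simp at hy
  exact sum_sign_smul_contraction hK₂ hK _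
    (fun w y c hy => by rw [update_of_ne (hyb y hy).symm])
    (fun w y c hy => update_comm (hyb y hy) _ _ _)

theorem contraction_sumComm_inl (i : Fin m) (j k : α) :
    contraction K (fun w => if w (inl i) = k then 1 else 0) (fun w => update w (inl i) j)
      (sumComm _ _) = partialContraction K i j k := by
  simp only [contraction, Fintype.sum_sum_arrow_eq_sum_elim, partialContraction, Sum.elim_inl,
    ← Sum.elim_update_left]
  rfl

theorem contraction_sumComm_inr (i : Fin m) (j k : α) :
    contraction K (fun w => if w (inr i) = k then 1 else 0) (fun w => update w (inr i) j)
      (sumComm _ _) = partialContraction K i j k := by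
  simp only [contraction, Fintype.sum_sum_arrow_eq_sum_elim, partialContraction, Sum.elim_inr,
    ← Sum.elim_update_right]
  rw [Finset.sum_comm]
  refine sum_congr rfl fun p _ => sum_congr rfl fun q _ => ?_
  rw [mul_comm (K _ _)]
  rfl

theorem partialContraction_eq (hK₁ : IsAntisymmLower K) (hK₂ : IsAntisymmUpper K)
    (i i' : Fin m) (j k : α) : partialContraction K i j k = partialContraction K i' j k := by
  set s := Equiv.swap i i'
  rw [partialContraction, ← (arrowCongr s (Equiv.refl α)).sum_comp]
  refine sum_congr rfl fun p _ => sum_congr rfl fun q _ => ?_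
  have hp : arrowCongr s (Equiv.refl α) p = p ∘ s := by
    ext x; simp [s, swap_apply_def]
  have hu : update (p ∘ s) i j = update p i' j ∘ s := by
    rw [update_comp_equiv, symm_swap, swap_apply_right]
  rw [hp, comp_apply, show s i = i' from swap_apply_left i i', hu, hK₁, hK₂, smul_mul_smul_comm,
    Int.units_mul_self, one_smul]

theorem lovelock_identity [NoZeroDivisors R] [CharZero R] (hn : Fintype.card α ≤ 2 * m)
    (hK₁ : IsAntisymmLower K) (hK₂ : IsAntisymmUpper K) (hK : IsTraceFree K)
    (i : Fin m) (j k : α) :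
    (2 * m : R) * partialContraction K i j k = (if j = k then 1 else 0) * fullContraction K := by
  have hsum := sum_sign_smul_contraction_sub_eq_zero (K := K) hn j k
  simp only [smul_sub, sum_sub_distrib, smul_sum] at hsum
  rw [Finset.sum_comm (s := univ) (t := univ),
    sum_sign_smul_contraction hK₂ hK true (fun _ _ _ _ => rfl) (fun _ _ _ _ => rfl)] at hsum
  simp only [sum_sign_smul_contraction_update hK₂ hK] at hsum
  rw [← smul_sum, ← smul_sum, ← smul_sub, ← smul_sub, nsmul_eq_mul, mul_eq_zero,
    smul_eq_zero_iff_eq, sub_eq_zero, contraction_sumComm_const_id, Fintype.sum_sum_type] at hsum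
  simp only [contraction_sumComm_inl, contraction_sumComm_inr,
    partialContraction_eq hK₁ hK₂ _ i] at hsum
  rcases hsum with h | h
  · exact absurd h (Nat.cast_ne_zero.mpr (by positivity))
  · rw [h, sum_const, card_univ, Fintype.card_fin, nsmul_eq_mul]
    ring

end DoubleForm

open DoubleForm in
/-- Lovelock's identity `H_{abk}^{def} H_{def}^{abj} = (1/6) δ^j_k H_{abc}^{def} H_{def}^{abc}`
for trace-free double three-forms in six dimensions and lower. -/
theorem lovelock_double_three_form {n : ℕ} (hn : n ≤ 6)
    (H : Fin n → Fin n → Fin n → Fin n → Fin n → Fin n → ℝ)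
    (hAnti1 : ∀ (σ : Equiv.Perm (Fin 3)) (a b c d e f : Fin n),
      H (![a, b, c] (σ 0)) (![a, b, c] (σ 1)) (![a, b, c] (σ 2)) d e f
        = ((Equiv.Perm.sign σ : ℤ) : ℝ) * H a b c d e f)
    (hAnti2 : ∀ (σ : Equiv.Perm (Fin 3)) (a b c d e f : Fin n),
      H a b c (![d, e, f] (σ 0)) (![d, e, f] (σ 1)) (![d, e, f] (σ 2))
        = ((Equiv.Perm.sign σ : ℤ) : ℝ) * H a b c d e f)
    (hTF : ∀ a b d e, ∑ i, H a b i d e i = 0)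
    (j k : Fin n) :
    ∑ a, ∑ b, ∑ d, ∑ e, ∑ f, H a b k d e f * H d e f a b j =
      (if j = k then (1 : ℝ) else 0) * (1 / 6) *
        ∑ a, ∑ b, ∑ c, ∑ d, ∑ e, ∑ f, H a b c d e f * H d e f a b c := by
  set K : (Fin 3 → Fin n) → (Fin 3 → Fin n) → ℝ :=
    fun p q => H (p 0) (p 1) (p 2) (q 0) (q 1) (q 2)
  have heta : ∀ p : Fin 3 → Fin n, ![p 0, p 1, p 2] = p := fun p => by
    ext x; fin_cases x <;> rfl
  have hK₁ : IsAntisymmLower K := fun ρ p r => by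
    simpa [K, heta, Units.smul_def] using hAnti1 ρ (p 0) (p 1) (p 2) (r 0) (r 1) (r 2)
  have hK₂ : IsAntisymmUpper K := fun ρ p r => by
    simpa [K, heta, Units.smul_def] using hAnti2 ρ (p 0) (p 1) (p 2) (r 0) (r 1) (r 2)
  have hK : IsTraceFree K := IsTraceFree.of_sum_update hK₁ hK₂ 2 2 fun p r => by
    simpa [K, update_apply] using hTF (p 0) (p 1) (r 0) (r 1)
  have key := lovelock_identity (by simpa using hn) hK₁ hK₂ hK 2 j k
  have hM : partialContraction K 2 j k =
      ∑ a, ∑ b, ∑ d, ∑ e, ∑ f, H a b k d e f * H d e f a b j := by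
    simp only [partialContraction, ← mul_sum]
    simp [Fintype.sum_fin_succ_arrow, K, ite_mul]
  have hT : fullContraction K = ∑ a, ∑ b, ∑ c, ∑ d, ∑ e, ∑ f, H a b c d e f * H d e f a b c := by
    simp [fullContraction, Fintype.sum_fin_succ_arrow, K]
  rw [← hM, ← hT]
  push_cast at key
  linear_combination key / 6
end
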